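/- arXiv:1011.2987 — 3 statements merged into one kernel-verified Lean document; each statement's English description precedes it below -/
import Mathlib

section
/- Let G be a finitely generated group and H a subgroup of G of finite index k. Let Σ be a finite symmetric generating set of G containing the identity. Then there exists a finite symmetric generating set Σ' of H containing the identity such that for all n, c_{G,Σ}(n) ≥ (1/k) · c_{H,Σ'}(⌊n/(2k+1)⌋). -/
open scoped Pointwise

/-- `S` is a finite symmetric generating set of `G` containing the identity. -/
def IsSymmGenSet {G : Type*} [Group G] (S : Finset G) : Prop :=
  Subgroup.closure (S : Set G) = ⊤ ∧ (∀ g ∈ S, g⁻¹ ∈ S) ∧ (1 : G) ∈ S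

/-- Number of conjugacy classes of `G` meeting the set `A`. -/
noncomputable def conjClassCount {G : Type*} [Group G] (A : Set G) : ℕ :=
  Set.ncard {c : ConjClasses G | ∃ g ∈ A, ConjClasses.mk g = c}

/-- `c_{G,Σ}(n)`: the number of conjugacy classes of `G` meeting the `n`-ball `Σ^n`. -/
noncomputable def conjGrowth {G : Type*} [Group G] (S : Finset G) (n : ℕ) : ℕ :=
  conjClassCount ((S : Set G) ^ n)

/-- `C_{G,Σ} = liminf_{n→∞} (1/n) log c_{G,Σ}(n)`. -/
noncomputable def conjGrowthRate {G : Type*} [Group G] (S : Finset G) : ℝ :=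
  Filter.liminf (fun n : ℕ => Real.log (conjGrowth S n) / n) Filter.atTop

/-!
Since `1 ∈ Σ`, the sets of cosets of `H` met by the balls `Σ^j` grow strictly until they
stabilise, and a stable one is `Σ`-invariant, hence everything: so `Σ^(k-1)` meets every coset.
Schreier's lemma, applied to a transversal inside `Σ^(k-1)`, shows that `H ∩ Σ^(2k-1)`
generates `H`; hence `Σ' = H ∩ Σ^(2k+1)` is a symmetric generating set of `H` with
`Σ'^m ⊆ Σ^((2k+1)m)`. Finally, at most `k` conjugacy classes of `H` fuse into one class of `G`:
an `H`-class inside the `G`-class of `h₀` is determined by the coset of a conjugator moving `h₀`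
into it.
-/

open Set

section

variable {G : Type*} [Group G]

lemma IsSymmGenSet.inv_mem_pow {S : Finset G} (hS : IsSymmGenSet S) {n : ℕ} {g : G}
    (hg : g ∈ (S : Set G) ^ n) : g⁻¹ ∈ (S : Set G) ^ n := by
  have hinv : (S : Set G)⁻¹ = S :=
    inv_eq_self_iff_inv_subset.mpr fun g hg => inv_inv g ▸ hS.2.1 _ hg
  rwa [← hinv, inv_pow, Set.inv_mem_inv]

section Action

variable {X : Type*} [MulAction G X] [MulAction.IsPretransitive G X] [Finite X]

lemma eq_univ_of_smul_set_eq {S : Set G} (hS : Subgroup.closure S = ⊤) {A : Set X}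
    (hA : S • A = A) (hne : A.Nonempty) : A = univ := by
  have hstab : MulAction.stabilizer G A = ⊤ := by
    rw [eq_top_iff, ← hS, Subgroup.closure_le]
    intro s hs
    have hsub : s • A ⊆ A := (smul_set_subset_smul hs).trans hA.subset
    exact eq_of_subset_of_ncard_le hsub (ncard_smul_set s A).ge (toFinite A)
  obtain ⟨x, hx⟩ := hne
  refine eq_univ_of_forall fun y => ?_
  obtain ⟨g, rfl⟩ := MulAction.exists_smul_eq G x y
  have hg : g • A = A := MulAction.mem_stabilizer_iff.mp (hstab ▸ Subgroup.mem_top g)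
  exact hg ▸ smul_mem_smul_set hx

lemma pow_smul_singleton_eq_univ {S : Set G} (h1 : 1 ∈ S) (hS : Subgroup.closure S = ⊤)
    (x : X) : S ^ (Nat.card X - 1) • ({x} : Set X) = univ := by
  set A : ℕ → Set X := fun n => S ^ n • {x} with hA
  have succ_eq : ∀ n, A (n + 1) = S • A n := fun n => by simp only [hA, pow_succ', mul_smul]
  have mono : ∀ n, A n ⊆ A (n + 1) := fun n => by
    rw [succ_eq]; simpa using smul_set_subset_smul (t := A n) h1
  have grow : ∀ n, A n = univ ∨ n + 1 ≤ (A n).ncard := by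
    intro n
    induction n with
    | zero => right; simp [hA]
    | succ n ih =>
      by_cases hn : A (n + 1) = A n
      · refine .inl (hn ▸ eq_univ_of_smul_set_eq hS ((succ_eq n).symm.trans hn) ?_)
        exact ⟨x, 1, one_mem_pow h1, x, mem_singleton x, one_smul G x⟩
      · rcases ih with h | h
        · exact .inl (eq_univ_of_univ_subset (h ▸ mono n))
        · right
          have := ncard_lt_ncard ((mono n).ssubset_of_ne (Ne.symm hn)) (toFinite _)
          omega
  change A (Nat.card X - 1) = univ
  rcases grow (Nat.card X - 1) with h | h
  · exact h
  · have : Nonempty X := ⟨x⟩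
    have := Nat.card_pos (α := X)
    exact eq_of_subset_of_ncard_le (subset_univ _) (by rw [ncard_univ]; omega) (toFinite _)

end Action

namespace Subgroup

variable {H : Subgroup G} {S : Finset G}

lemma exists_isComplement_right_subset {T : Set G} (h1 : (1 : G) ∈ T)
    (hT : ∀ g : G, ∃ t ∈ T, g * t⁻¹ ∈ H) : ∃ R ⊆ T, IsComplement H R ∧ (1 : G) ∈ R := by
  classical
  choose f hfT hfH using fun q : Quotient (QuotientGroup.rightRel H) => hT q.out
  set f' := Function.update f (Quotient.mk'' 1) 1 with hf'
  have hf'T : ∀ q, f' q ∈ T := fun q => by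
    rcases eq_or_ne q (Quotient.mk'' 1) with rfl | hq
    · simpa [hf'] using h1
    · simpa [hf', hq] using hfT q
  refine ⟨range f', range_subset_iff.mpr hf'T, isComplement_range_right fun q => ?_,
    Quotient.mk'' 1, by simp [hf']⟩
  rcases eq_or_ne q (Quotient.mk'' 1) with rfl | hq
  · simp [hf']
  · simp only [hf', Function.update_of_ne hq]
    conv_rhs => rw [← q.out_eq']
    exact Quotient.sound' (QuotientGroup.rightRel_apply.mpr (hfH q))

lemma exists_isComplement_right_subset_pow [H.FiniteIndex] (hS : IsSymmGenSet S) :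
    ∃ R ⊆ (S : Set G) ^ (H.index - 1), IsComplement H R ∧ (1 : G) ∈ R := by
  refine exists_isComplement_right_subset (one_mem_pow hS.2.2) fun g => ?_
  -- find `t` in the left coset `g⁻¹ H`; then `t⁻¹` lies in the right coset `H g`
  have hcover := pow_smul_singleton_eq_univ hS.2.2 hS.1 ((1 : G) : G ⧸ H)
  obtain ⟨t, ht, -, rfl, hgt⟩ := hcover.symm ▸ mem_univ ((g⁻¹ : G) : G ⧸ H)
  refine ⟨t⁻¹, hS.inv_mem_pow ht, ?_⟩
  have := QuotientGroup.eq.mp (by simpa using hgt : ((t : G) : G ⧸ H) = (g⁻¹ : G))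
  simpa using H.inv_mem this

lemma closure_preimage_pow_eq_top [H.FiniteIndex] (hS : IsSymmGenSet S) :
    closure (((↑) : H → G) ⁻¹' ((S : Set G) ^ (2 * H.index - 1))) = ⊤ := by
  obtain ⟨R, hRS, hR, hR1⟩ := exists_isComplement_right_subset_pow (H := H) hS
  rw [eq_top_iff, ← closure_mul_image_eq_top hR hR1 hS.1]
  refine closure_mono ?_
  rintro _ ⟨_, ⟨r, hr, s, hs, rfl⟩, rfl⟩
  have hk := H.index_ne_zero_of_finite
  have hrs : r * s ∈ (S : Set G) ^ H.index := by
    rw [← Nat.sub_add_cancel (Nat.one_le_iff_ne_zero.mpr hk), pow_succ]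
    exact mul_mem_mul (hRS hr) hs
  have hrep := hS.inv_mem_pow (hRS (hR.toRightFun (r * s)).2)
  show r * s * _ ∈ (S : Set G) ^ (2 * H.index - 1)
  rw [show 2 * H.index - 1 = H.index + (H.index - 1) by omega, pow_add]
  exact mul_mem_mul hrs hrep

end Subgroup

namespace ConjClasses

lemma encard_preimage_map_subtype_le (H : Subgroup G) [H.FiniteIndex] (c : ConjClasses G) :
    (map H.subtype ⁻¹' {c}).encard ≤ H.index := by
  rcases (map H.subtype ⁻¹' {c}).eq_empty_or_nonempty with hc | ⟨d₀, hd₀⟩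
  · simp [hc]
  obtain ⟨h₀, rfl⟩ := mk_surjective d₀
  have hconj : ∀ d ∈ map H.subtype ⁻¹' {c},
      ∃ g : G, ∃ h : H, ConjClasses.mk h = d ∧ g * h₀ * g⁻¹ = h := by
    intro d hd
    obtain ⟨h, rfl⟩ := mk_surjective d
    have : ConjClasses.mk (h₀ : G) = ConjClasses.mk (h : G) := hd₀.trans hd.symm
    obtain ⟨g, hg⟩ := isConj_iff.mp (mk_eq_mk_iff_isConj.mp this)
    exact ⟨g, h, rfl, hg⟩
  choose! g h hmk hg using hconj
  have hinj : InjOn (fun d => (((g d)⁻¹ : G) : G ⧸ H)) (map H.subtype ⁻¹' {c}) := by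
    intro d₁ hd₁ d₂ hd₂ hq
    have hx : g d₁ * (g d₂)⁻¹ ∈ H := by simpa using QuotientGroup.eq.mp hq
    rw [← hmk d₁ hd₁, ← hmk d₂ hd₂, mk_eq_mk_iff_isConj, isConj_iff]
    refine ⟨⟨g d₂ * (g d₁)⁻¹, by simpa using H.inv_mem hx⟩, Subtype.ext ?_⟩
    simp only [Subgroup.coe_mul, Subgroup.coe_inv, ← hg d₁ hd₁, ← hg d₂ hd₂]
    group
  calc (map H.subtype ⁻¹' {c}).encard ≤ (univ : Set (G ⧸ H)).encard :=
        encard_le_encard_of_injOn (mapsTo_univ _ _) hinj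
    _ = H.index := by rw [encard_univ, ENat.card_eq_coe_natCard]; rfl

end ConjClasses

lemma finite_coe_pow (S : Finset G) (n : ℕ) : ((S : Set G) ^ n).Finite := by
  classical
  exact Finset.coe_pow S n ▸ (S ^ n).finite_toSet

lemma conjClassCount_eq_ncard_image (A : Set G) :
    conjClassCount A = (ConjClasses.mk '' A).ncard := rfl

lemma conjClassCount_mono {A B : Set G} (hAB : A ⊆ B) (hB : B.Finite) :
    conjClassCount A ≤ conjClassCount B := by
  simpa only [conjClassCount_eq_ncard_image] using ncard_le_ncard (image_mono hAB) (hB.image _)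

lemma conjClassCount_le_index_mul {H : Subgroup G} [H.FiniteIndex] (A : Finset H) :
    conjClassCount (A : Set H) ≤ H.index * conjClassCount (((↑) : H → G) '' A) := by
  classical
  have hA : conjClassCount (A : Set H) = (A.image ConjClasses.mk).card := by
    rw [conjClassCount_eq_ncard_image, ← ncard_coe_finset, Finset.coe_image]
  have hvalA : conjClassCount (((↑) : H → G) '' A) =
      ((A.image ConjClasses.mk).image (ConjClasses.map H.subtype)).card := by
    rw [conjClassCount_eq_ncard_image, ← ncard_coe_finset, Finset.coe_image, Finset.coe_image,
      image_image, image_image]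
    rfl
  rw [hA, hvalA]
  refine Finset.card_le_mul_card_image _ _ fun c _ => ?_
  have hfiber : ((A.image ConjClasses.mk).filter (ConjClasses.map H.subtype · = c) :
      Set (ConjClasses H)) ⊆ ConjClasses.map H.subtype ⁻¹' {c} := fun d hd => by
    simp only [Finset.coe_filter] at hd; exact hd.2
  have := (encard_le_encard hfiber).trans (ConjClasses.encard_preimage_map_subtype_le H c)
  rwa [encard_coe_eq_coe_finsetCard, Nat.cast_le] at this

/-- The paper's `Σ' = Σ^m ∩ H`, as a finite subset of `H`. -/
noncomputable def pullbackBall [DecidableEq G] (H : Subgroup G) (S : Finset G) (m : ℕ) :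
    Finset H :=
  (S ^ m).preimage (↑) Subtype.val_injective.injOn

lemma coe_pullbackBall [DecidableEq G] (H : Subgroup G) (S : Finset G) (m : ℕ) :
    (pullbackBall H S m : Set H) = (↑) ⁻¹' ((S : Set G) ^ m) := by
  rw [pullbackBall, Finset.coe_preimage, Finset.coe_pow]

lemma IsSymmGenSet.pullbackBall [DecidableEq G] {H : Subgroup G} [H.FiniteIndex] {S : Finset G}
    (hS : IsSymmGenSet S) {m : ℕ} (hm : 2 * H.index - 1 ≤ m) :
    IsSymmGenSet (pullbackBall H S m) := by
  simp only [IsSymmGenSet, ← Finset.mem_coe, coe_pullbackBall, mem_preimage]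
  refine ⟨?_, fun h hh => ?_, one_mem_pow hS.2.2⟩
  · refine eq_top_iff.mpr ((Subgroup.closure_preimage_pow_eq_top hS).ge.trans ?_)
    exact Subgroup.closure_mono (preimage_mono (pow_subset_pow_right hS.2.2 hm))
  · simpa using hS.inv_mem_pow hh

lemma image_pow_pullbackBall_subset [DecidableEq G] (H : Subgroup G) (S : Finset G) (m j : ℕ) :
    ((↑) : H → G) '' ((pullbackBall H S m : Set H) ^ j) ⊆ (S : Set G) ^ (m * j) := by
  rw [← H.coe_subtype, image_pow, pow_mul]
  exact pow_subset_pow_left ((coe_pullbackBall H S m).symm ▸ image_preimage_subset _ _)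

lemma conjGrowth_pullbackBall_le [DecidableEq G] {H : Subgroup G} [H.FiniteIndex] (S : Finset G)
    (m j : ℕ) : conjGrowth (pullbackBall H S m) j ≤ H.index * conjGrowth S (m * j) := by
  rw [conjGrowth, ← Finset.coe_pow]
  refine (conjClassCount_le_index_mul _).trans (Nat.mul_le_mul_left _ ?_)
  rw [Finset.coe_pow]
  exact conjClassCount_mono (image_pow_pullbackBall_subset H S m j) (finite_coe_pow S _)

lemma conjGrowth_mono {S : Finset G} (h1 : (1 : G) ∈ S) : Monotone (conjGrowth S) :=
  fun _ _ hmn => conjClassCount_mono (pow_subset_pow_right h1 hmn) (finite_coe_pow S _)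

end

/-- For a subgroup `H` of index `k` in `G`, there is a finite symmetric generating set `Σ'`
of `H` containing the identity with `c_{G,Σ}(n) ≥ (1/k)·c_{H,Σ'}(⌊n/(2k+1)⌋)` for all `n`. -/
theorem conjGrowth_finiteIndexSubgroup {G : Type*} [Group G]
    (H : Subgroup G) (k : ℕ) (hk : 0 < k) (hidx : H.index = k)
    (S : Finset G) (hS : IsSymmGenSet S) :
    ∃ S' : Finset H, IsSymmGenSet S' ∧
      ∀ n : ℕ, conjGrowth S' (n / (2 * k + 1)) ≤ k * conjGrowth S n := by
  classical
  have : H.FiniteIndex := ⟨by omega⟩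
  subst hidx
  refine ⟨pullbackBall H S (2 * H.index + 1), hS.pullbackBall (by omega), fun n => ?_⟩
  exact (conjGrowth_pullbackBall_le S _ _).trans
    (Nat.mul_le_mul_left _ (conjGrowth_mono hS.2.2 (Nat.mul_div_le n _)))
end

section
/- Let K be a field. Then the centralizer in Aff(K) of any nontrivial element of Aff(K) is an abelian group. -/
open scoped Pointwise

/-- The affine group of the line over `K`: pairs `(b, a)` representing `x ↦ a x + b`. -/
def Aff (K : Type*) [Field K] : Type _ := K × Kˣ

namespace Aff

variable {K : Type*} [Field K]

instance instGroup : Group (Aff K) where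
  mul := fun p q : K × Kˣ => ((p.1 + (p.2 : K) * q.1, p.2 * q.2) : K × Kˣ)
  one := ((0, 1) : K × Kˣ)
  inv := fun p : K × Kˣ => ((((p.2⁻¹ : Kˣ) : K) * (-p.1), p.2⁻¹) : K × Kˣ)
  mul_assoc := by
    rintro ⟨b1, a1⟩ ⟨b2, a2⟩ ⟨b3, a3⟩
    refine Prod.ext ?_ ?_
    · show (b1 + (a1 : K) * b2) + ((a1 * a2 : Kˣ) : K) * b3
        = b1 + (a1 : K) * (b2 + (a2 : K) * b3)
      push_cast; ring
    · show a1 * a2 * a3 = a1 * (a2 * a3)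
      exact mul_assoc _ _ _
  one_mul := by
    rintro ⟨b, a⟩
    refine Prod.ext ?_ ?_
    · show (0 : K) + ((1 : Kˣ) : K) * b = b
      simp
    · show (1 : Kˣ) * a = a
      simp
  mul_one := by
    rintro ⟨b, a⟩
    refine Prod.ext ?_ ?_
    · show b + (a : K) * 0 = b
      simp
    · show a * 1 = a
      simp
  inv_mul_cancel := by
    rintro ⟨b, a⟩
    refine Prod.ext ?_ ?_
    · show ((a⁻¹ : Kˣ) : K) * (-b) + ((a⁻¹ : Kˣ) : K) * b = 0
      ring
    · show a⁻¹ * a = 1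
      simp

/-- The affine map `u(a,b) : x ↦ a x + b`. -/
def u (a : Kˣ) (b : K) : Aff K := ((b, a) : K × Kˣ)

/-- The projection `Aff(K) → K^×` onto the linear part. -/
def toUnitsHom (K : Type*) [Field K] : Aff K →* Kˣ where
  toFun p := (p : K × Kˣ).2
  map_one' := rfl
  map_mul' _ _ := rfl

/-- An element of `Aff K` is unipotent when its linear part is trivial. -/
def IsUnipotent (p : Aff K) : Prop := toUnitsHom K p = 1

end Aff

/-- A group is virtually nilpotent if it has a nilpotent subgroup of finite index. -/
def VirtuallyNilpotent (G : Type*) [Group G] : Prop :=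
  ∃ H : Subgroup G, H.FiniteIndex ∧ Group.IsNilpotent H

/-- A group is virtually solvable if it has a solvable subgroup of finite index. -/
def VirtuallySolvable (G : Type*) [Group G] : Prop :=
  ∃ H : Subgroup G, H.FiniteIndex ∧ IsSolvable H

/-- A global field is a finite extension of `ℚ` or of `𝔽_p(t)` for a prime `p`. -/
def IsGlobalField (K : Type*) [Field K] : Prop :=
  (∃ _ : CharZero K, FiniteDimensional ℚ K) ∨
  (∃ (p : ℕ) (_ : Fact p.Prime) (_ : Algebra (RatFunc (ZMod p)) K),
    FiniteDimensional (RatFunc (ZMod p)) K)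

/-!
The elements `u(a,b)` and `u(c,d)` commute exactly when the vectors
`(b, a - 1)` and `(d, c - 1)` of `K²` are parallel, and `u(a,b) = 1` exactly when its vector
is zero. Parallelism to a fixed nonzero vector is transitive, so any two elements commuting
with a nontrivial `g` commute with each other.
-/

theorem mul_eq_mul_of_parallel_of_ne_zero {R : Type*} [CommRing R] [IsDomain R]
    {p q x₁ x₂ y₁ y₂ : R} (hpq : p ≠ 0 ∨ q ≠ 0)
    (hx : p * x₂ = x₁ * q) (hy : p * y₂ = y₁ * q) : x₁ * y₂ = y₁ * x₂ := by
  rcases hpq with hp | hq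
  · exact mul_left_cancel₀ hp (by linear_combination x₁ * hy - y₁ * hx)
  · exact mul_left_cancel₀ hq (by linear_combination x₂ * hy - y₂ * hx)

namespace Aff

variable {K : Type*} [Field K]

theorem exists_eq_u (p : Aff K) : ∃ a b, p = u a b := ⟨(p : K × Kˣ).2, (p : K × Kˣ).1, rfl⟩

theorem u_mul_u (a c : Kˣ) (b d : K) : u a b * u c d = u (a * c) (b + a * d) := rfl

theorem u_eq_u_iff {a c : Kˣ} {b d : K} : u a b = u c d ↔ a = c ∧ b = d := by
  show ((b, a) : K × Kˣ) = (d, c) ↔ _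
  exact Prod.ext_iff.trans and_comm

theorem u_eq_one_iff {a : Kˣ} {b : K} : u a b = 1 ↔ a = 1 ∧ b = 0 := u_eq_u_iff

theorem commute_u_iff {a c : Kˣ} {b d : K} :
    Commute (u a b) (u c d) ↔ b * (c - 1) = d * (a - 1) := by
  rw [Commute, SemiconjBy, u_mul_u, u_mul_u, u_eq_u_iff, mul_comm c a]
  constructor
  · rintro ⟨-, h⟩
    linear_combination -h
  · intro h
    exact ⟨rfl, by linear_combination -h⟩

theorem commute_trans_of_ne_one {g x y : Aff K} (hg : g ≠ 1)
    (hx : Commute x g) (hy : Commute g y) : Commute x y := by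
  obtain ⟨a, b, rfl⟩ := exists_eq_u g
  obtain ⟨c, d, rfl⟩ := exists_eq_u x
  obtain ⟨e, f, rfl⟩ := exists_eq_u y
  rw [commute_u_iff]
  have hgx := commute_u_iff.mp hx.symm
  have hgy := commute_u_iff.mp hy
  have hg' : b ≠ 0 ∨ (a : K) - 1 ≠ 0 := by
    rw [Ne, u_eq_one_iff] at hg
    rw [Ne, Ne, sub_eq_zero, Units.val_eq_one]
    tauto
  exact mul_eq_mul_of_parallel_of_ne_zero hg' hgx hgy

end Aff

/-- The centralizer in `Aff(K)` of any nontrivial element is abelian. -/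
theorem centralizer_abelian_aff {K : Type*} [Field K] (g : Aff K) (hg : g ≠ 1) :
    ∀ x y : Subgroup.centralizer ({g} : Set (Aff K)), x * y = y * x := by
  rintro ⟨x, hx⟩ ⟨y, hy⟩
  rw [Subgroup.mem_centralizer_singleton_iff] at hx hy
  exact Subtype.ext (Aff.commute_trans_of_ne_one hg hx hy.symm).eq
end

section
/- Let K be a field. Then every nilpotent subgroup of Aff(K) is abelian. -/
/-!
Linear parts commute, so every commutator `⁅p, q⁆` is a translation, and translations commute
with each other. If `H` is not abelian, some `⁅p, q⁆ ∈ H` is a nontrivial translation `x ↦ x + s`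
and some `x ∈ H` has linear part `a ≠ 1`. Commutating a translation with `x` multiplies it by
`1 - a`, so the `n`-fold iterated commutator `⁅⋯⁅⁅p, q⁆, x⁆⋯, x⁆` is translation by
`(1 - a)ⁿ s ≠ 0`; but it lies in the `n`-th term of the lower central series, which is trivial for
large `n` in a nilpotent group.
-/

open scoped Pointwise

open scoped commutatorElement

theorem Group.exists_iterate_commutatorElement_eq_one {G : Type*} [Group G]
    [Group.IsNilpotent G] (x : G) : ∃ n, ∀ w : G, (⁅·, x⁆)^[n] w = 1 := by
  obtain ⟨n, hn⟩ := Subgroup.nilpotent_iff_lowerCentralSeries.mp ‹Group.IsNilpotent G›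
  have iterate_mem : ∀ k (w : G), (⁅·, x⁆)^[k] w ∈ (⊤ : Subgroup G).lowerCentralSeries k := by
    intro k w
    induction k with
    | zero => exact Subgroup.mem_top _
    | succ k ih =>
      rw [Function.iterate_succ_apply', Subgroup.lowerCentralSeries_succ]
      exact Subgroup.commutator_mem_commutator ih (Subgroup.mem_top x)
  exact ⟨n, fun w => Subgroup.mem_bot.mp (hn ▸ iterate_mem n w)⟩

namespace Aff

variable {K : Type*} [Field K]

theorem exists_eq_u_one_of_isUnipotent {p : Aff K} (hp : IsUnipotent p) : ∃ b, p = u 1 b :=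
  ⟨(p : K × Kˣ).1, Prod.ext rfl hp⟩

theorem u_one_eq_one_iff {b : K} : u 1 b = 1 ↔ b = 0 :=
  ⟨fun h => congrArg (fun p : Aff K => (p : K × Kˣ).1) h, fun h => h ▸ rfl⟩

theorem u_one_mul_u_one (b c : K) : u 1 b * u 1 c = u 1 (b + c) :=
  Prod.ext (show b + ((1 : Kˣ) : K) * c = b + c by simp) (mul_one _)

theorem mul_comm_of_isUnipotent {p q : Aff K} (hp : IsUnipotent p) (hq : IsUnipotent q) :
    p * q = q * p := by
  obtain ⟨b, rfl⟩ := exists_eq_u_one_of_isUnipotent hp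
  obtain ⟨c, rfl⟩ := exists_eq_u_one_of_isUnipotent hq
  rw [u_one_mul_u_one, u_one_mul_u_one, add_comm]

theorem isUnipotent_commutatorElement (p q : Aff K) : IsUnipotent ⁅p, q⁆ := by
  rw [IsUnipotent, map_commutatorElement, commutatorElement_eq_one_iff_mul_comm, mul_comm]

theorem commutatorElement_u_one (b : K) (x : Aff K) :
    ⁅u 1 b, x⁆ = u 1 ((1 - toUnitsHom K x) * b) := by
  obtain ⟨c, a⟩ := x
  refine Prod.ext ?_ (isUnipotent_commutatorElement _ _)
  show b + 1 * c + ((1 * a : Kˣ) : K) * ((((1 : Kˣ)⁻¹ : Kˣ) : K) * -b)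
      + ((1 * a * (1 : Kˣ)⁻¹ : Kˣ) : K) * (((a⁻¹ : Kˣ) : K) * -c) = (1 - (a : K)) * b
  simp only [one_mul, inv_one, Units.val_one, mul_one, Units.val_inv_eq_inv_val]
  field_simp
  ring

theorem mapsTo_commutatorElement {x : Aff K} (hx : toUnitsHom K x ≠ 1) :
    Set.MapsTo (⁅·, x⁆) {w : Aff K | IsUnipotent w ∧ w ≠ 1} {w | IsUnipotent w ∧ w ≠ 1} := by
  rintro w ⟨hw, hw1⟩
  refine ⟨isUnipotent_commutatorElement w x, ?_⟩
  obtain ⟨b, rfl⟩ := exists_eq_u_one_of_isUnipotent hw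
  rw [Ne, u_one_eq_one_iff] at hw1
  show ⁅u 1 b, x⁆ ≠ 1
  rw [commutatorElement_u_one, Ne, u_one_eq_one_iff, mul_eq_zero, sub_eq_zero, not_or]
  exact ⟨fun h => hx (Units.val_eq_one.mp h.symm), hw1⟩

end Aff

/-- Every nilpotent subgroup of `Aff(K)` is abelian. -/
theorem nilpotent_subgroup_aff_abelian {K : Type*} [Field K] (H : Subgroup (Aff K))
    (hH : Group.IsNilpotent H) : ∀ x y : H, x * y = y * x := by
  intro p q
  by_contra hpq
  obtain ⟨x, hx⟩ : ∃ x : H, Aff.toUnitsHom K x ≠ 1 := by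
    by_contra! h
    exact hpq (Subtype.ext (Aff.mul_comm_of_isUnipotent (h p) (h q)))
  have hval : Function.Semiconj Subtype.val (⁅·, x⁆) (⁅·, (x : Aff K)⁆) :=
    fun w => map_commutatorElement H.subtype w x
  obtain ⟨n, hn⟩ := Group.exists_iterate_commutatorElement_eq_one x
  have hcomm : ((⁅p, q⁆ : H) : Aff K) ≠ 1 := fun h =>
    hpq (commutatorElement_eq_one_iff_mul_comm.mp (Subtype.ext h))
  have hiterate : (⁅·, (x : Aff K)⁆)^[n] ((⁅p, q⁆ : H) : Aff K) = 1 := by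
    rw [← hval.iterate_right, hn, OneMemClass.coe_one]
  exact ((Aff.mapsTo_commutatorElement hx).iterate n
    ⟨Aff.isUnipotent_commutatorElement (p : Aff K) q, hcomm⟩).2 hiterate
end
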